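/- arXiv:1006.4141 — 3 statements merged into one kernel-verified Lean document; each statement's English description precedes it below -/
import Mathlib

section
/- Let R be a Noetherian UFD, M a finitely generated torsion module over R[t^{±1}] admitting a square presentation matrix A (so its order Δ₀(M) = det A up to units). Let r ≥ 1 and regard M as an R[s^{±1}]-module with s = tʳ. Then the order of M as an R[s^{±1}]-module equals det(A)⁽ʳ⁾(s), i.e., if det A = c₀∏(t − ξⱼ) over the splitting field then the R[s^{±1}]-order is c₀ʳ∏(s − ξⱼʳ) up to units. -/
open Polynomial

/-- Over an algebraically closed field `K`, for `f(t) = c₀ ∏ (t - ξⱼ)`,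
`polyPowK r f` is `f⁽ʳ⁾(t) = c₀ʳ ∏ (t - ξⱼʳ)`. -/
noncomputable def polyPowK {K : Type*} [Field K] [IsAlgClosed K]
    (r : ℕ) (f : Polynomial K) : Polynomial K :=
  C (f.leadingCoeff ^ r) * (f.roots.map (fun ξ => X - C (ξ ^ r))).prod

/-- The matrix of multiplication by `t` on `R[t]`, regarded as a free module of
rank `r` over `R[s]` with `s = tʳ` and basis `1, t, …, t^{r-1}`: the variable
`X` of the entries plays the role of `s`. -/
noncomputable def tMat (R : Type*) [CommRing R] (r : ℕ) :
    Matrix (Fin r) (Fin r) (Polynomial R) :=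
  fun i j => if (i : ℕ) = (j : ℕ) + 1 then 1
    else if (i : ℕ) = 0 ∧ (j : ℕ) = r - 1 then X else 0

/-- Given a square presentation matrix `A` over `R[t]` of a module `M`, the
matrix over `R[s]` (with `s = tʳ`) presenting `M` as an `R[s]`-module:
each entry `A i j ∈ R[t]` is replaced by the `r × r` matrix of multiplication
by `A i j` on `R[t]` over `R[s]`. -/
noncomputable def restMat {R : Type*} [CommRing R] {n r : ℕ}
    (A : Matrix (Fin n) (Fin n) (Polynomial R)) :
    Matrix (Fin n × Fin r) (Fin n × Fin r) (Polynomial R) :=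
  fun p q => (Polynomial.aeval (tMat R r) (A p.1 q.1)) p.2 q.2

/-!
The blocks of `restMat A` are the matrices of multiplication by the entries of `A` on `R[t]`
over `R[s]`; they commute, so Silvester's theorem on block determinants (`Matrix.det_det`)
gives `det (restMat A) = det (aeval (tMat R r) (det A))`, the norm of `det A` from `R[t]` down
to `R[s]`. After base change to an algebraically closed field, `det A = c₀ ∏ (t - ξⱼ)` and the
norm is multiplicative: `c₀` contributes `c₀ʳ`, and `t - ξ` contributes `±(s - ξʳ)` because
`tMat R r` is the matrix of the root of `X ^ r - s` in the power basis of `R[s][X] ⧸ (X ^ r - s)`,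
so its characteristic polynomial is `X ^ r - s`.
-/

theorem det_restMat {R : Type*} [CommRing R] {n r : ℕ} (A : Matrix (Fin n) (Fin n) R[X]) :
    (restMat (r := r) A).det = (aeval (tMat R r) A.det).det :=
  (Matrix.det_det A (aeval (tMat R r)).toRingHom).symm

theorem AdjoinRoot.minpoly_root_of_monic {R : Type*} [CommRing R] {g : R[X]} (hg : g.Monic) :
    minpoly R (AdjoinRoot.root g) = g := by
  nontriviality R
  refine (minpoly.unique' R _ hg (AdjoinRoot.aeval_eq g ▸ AdjoinRoot.mk_self) fun q hq => ?_).symm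
  refine or_iff_not_imp_left.2 fun hq0 h0 => ?_
  have := (AdjoinRoot.powerBasis' hg).dim_le_degree_of_root hq0 h0
  rw [AdjoinRoot.powerBasis'_dim, ← degree_eq_natDegree hg.ne_zero] at this
  exact this.not_gt hq

theorem charpoly_tMat {R : Type*} [CommRing R] {r : ℕ} (hr : 0 < r) :
    (tMat R r).charpoly = X ^ r - C X := by
  nontriviality R
  have hg := monic_X_pow_sub_C (X : R[X]) hr.ne'
  set pb := AdjoinRoot.powerBasis' hg
  have hdim : pb.dim = r := natDegree_X_pow_sub_C
  have hminpoly : minpoly R[X] pb.gen = X ^ r - C X := AdjoinRoot.minpoly_root_of_monic hg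
  suffices tMat R r = (Algebra.leftMulMatrix pb.basis pb.gen).reindex (finCongr hdim)
      (finCongr hdim) by
    rw [this, Matrix.charpoly_reindex, charpoly_leftMulMatrix, hminpoly]
  rw [pb.leftMulMatrix, pb.minpolyGen_eq, hminpoly]
  unfold tMat
  funext i j
  rw [Matrix.reindex_apply]
  simp only [finCongr_symm, Matrix.submatrix_apply, finCongr_apply, Matrix.of_apply, Fin.val_cast,
    coeff_sub, coeff_X_pow, coeff_C]
  grind

theorem det_aeval_tMat_X_sub_C {k : Type*} [CommRing k] {r : ℕ} (hr : 0 < r) (ξ : k) :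
    (aeval (tMat k r) (X - C ξ)).det = (-1) ^ (r + 1) * (X - C (ξ ^ r)) := by
  have hξ : algebraMap k (Matrix (Fin r) (Fin r) k[X]) ξ = Matrix.scalar (Fin r) (C ξ) := by
    simp [Matrix.algebraMap_eq_diagonal, Matrix.scalar_apply]
  rw [map_sub, aeval_X, aeval_C, hξ, ← neg_sub, Matrix.det_neg, ← Matrix.eval_charpoly,
    charpoly_tMat hr]
  simp only [eval_sub, eval_pow, eval_C, eval_X, Fintype.card_fin, C_pow]
  ring

theorem det_aeval_tMat {k : Type*} [Field k] [IsAlgClosed k] {r : ℕ} (hr : 0 < r) (g : k[X]) :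
    (aeval (tMat k r) g).det = (-1) ^ ((r + 1) * g.roots.card) * polyPowK r g := by
  let detAeval : k[X] →* k[X] := Matrix.detMonoidHom.comp (aeval (tMat k r)).toMonoidHom
  have hroot (ξ : k) : detAeval (X - C ξ) = (-1) ^ (r + 1) * (X - C (ξ ^ r)) :=
    det_aeval_tMat_X_sub_C hr ξ
  have hconst : detAeval (C g.leadingCoeff) = C (g.leadingCoeff ^ r) := by
    simp [detAeval, Matrix.algebraMap_eq_diagonal]
  change detAeval g = _
  conv_lhs => rw [(IsAlgClosed.splits g).eq_prod_roots]
  rw [map_mul, hconst, map_multiset_prod, Multiset.map_map]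
  simp only [Function.comp_def, hroot, Multiset.prod_map_mul, Multiset.map_const',
    Multiset.prod_replicate, polyPowK]
  ring

theorem tMat_map {R S : Type*} [CommRing R] [CommRing S] (φ : R →+* S) (r : ℕ) :
    (tMat R r).map (mapRingHom φ) = tMat S r := by
  ext i j : 2
  simp only [Matrix.map_apply, tMat]
  split_ifs <;> simp

theorem aeval_tMat_map {R S : Type*} [CommRing R] [CommRing S] (φ : R →+* S) (r : ℕ)
    (f : R[X]) : (aeval (tMat R r) f).map (mapRingHom φ) = aeval (tMat S r) (f.map φ) := by
  have hC : (mapRingHom φ).mapMatrix.comp (algebraMap R (Matrix (Fin r) (Fin r) R[X])) =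
      (algebraMap S (Matrix (Fin r) (Fin r) S[X])).comp φ := by
    ext a : 1
    simp [Matrix.algebraMap_eq_diagonal]
  rw [aeval_def, aeval_def, eval₂_map, ← RingHom.mapMatrix_apply, hom_eval₂, hC,
    RingHom.mapMatrix_apply, tMat_map]

theorem stmt_10_general {R : Type*} [CommRing R] [IsDomain R] (n r : ℕ) (hr : 0 < r)
    (A : Matrix (Fin n) (Fin n) (Polynomial R)) :
    ∃ (c : Rˣ) (i j : ℕ),
      (X : Polynomial (AlgebraicClosure (FractionRing R))) ^ i *
          Polynomial.C (algebraMap R (AlgebraicClosure (FractionRing R)) c) *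
          ((restMat (r := r) A).det.map (algebraMap R (AlgebraicClosure (FractionRing R)))) =
        X ^ j * polyPowK r (A.det.map (algebraMap R (AlgebraicClosure (FractionRing R)))) := by
  set φ := algebraMap R (AlgebraicClosure (FractionRing R))
  set N := (r + 1) * (A.det.map φ).roots.card
  have hdet : (restMat (r := r) A).det.map φ = (-1) ^ N * polyPowK r (A.det.map φ) := by
    rw [det_restMat, ← coe_mapRingHom, RingHom.map_det, RingHom.mapMatrix_apply, aeval_tMat_map,
      det_aeval_tMat hr, coe_mapRingHom]
  refine ⟨(-1) ^ N, 0, 0, ?_⟩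
  rw [hdet, ← mul_assoc]
  simp [← pow_add, ← two_mul, pow_mul]

/-- The order of the restricted-scalars module, i.e. the determinant of the
presentation matrix `restMat A` over `R[s]`, equals `(det A)⁽ʳ⁾` up to units
of `R[s^{±1}]`, where `(det A)⁽ʳ⁾` is computed from the roots of `det A` in
the algebraic closure of the fraction field of `R`. -/
theorem stmt_10 {R : Type*} [CommRing R] [IsDomain R] [IsNoetherianRing R]
    [UniqueFactorizationMonoid R] (n r : ℕ) (hr : 0 < r)
    (A : Matrix (Fin n) (Fin n) (Polynomial R)) (hA : A.det ≠ 0) :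
    ∃ (c : Rˣ) (i j : ℕ),
      (X : Polynomial (AlgebraicClosure (FractionRing R))) ^ i *
          Polynomial.C (algebraMap R (AlgebraicClosure (FractionRing R)) c) *
          ((restMat (r := r) A).det.map (algebraMap R (AlgebraicClosure (FractionRing R)))) =
        X ^ j * polyPowK r (A.det.map (algebraMap R (AlgebraicClosure (FractionRing R)))) :=
  stmt_10_general n r hr A
end

section
/- Let M be a finite (as a set) module over ℤ[s^{±1}]. Then the order Δ₀(M) of M is a unit (i.e., pseudonull modules have trivial order). -/
/-
If `a` annihilates the cokernel of an `n × m` presentation matrix `F`, then `a • eⱼ = F vⱼ` for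
every basis vector, so `F * V = a • 1` and Cauchy–Binet makes every common divisor of the maximal
minors of `F` divide `aⁿ`. A finite module is killed by its cardinality `N` and by `T ^ k - 1`,
where `k` is the order of the permutation `x ↦ T • x`. Hence `Δ` divides a nonzero constant and a
power of the monic `T ^ k - 1`. Dividing a nonzero constant forces `Δ` to be a monomial `c • T ^ i`,
and then `c` divides the leading coefficient `1`.
-/

/-- `Δ` is the order (gcd of the maximal minors of a presentation matrix) of the
finitely generated module `M` over the commutative ring `A`. -/
def IsOrderOf {A : Type*} [CommRing A] (Δ : A)
    (M : Type*) [AddCommGroup M] [Module A M] : Prop :=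
  ∃ (m n : ℕ) (F : Matrix (Fin n) (Fin m) A),
    Nonempty (((Fin n → A) ⧸ LinearMap.range (Matrix.toLin' F)) ≃ₗ[A] M) ∧
    (∀ e : Fin n ↪ Fin m, Δ ∣ (F.submatrix id ⇑e).det) ∧
    (∀ d : A, (∀ e : Fin n ↪ Fin m, d ∣ (F.submatrix id ⇑e).det) → d ∣ Δ)

open Matrix Polynomial LaurentPolynomial

theorem Matrix.det_mul_eq_sum_submatrix {A ι κ : Type*} [CommRing A] [Fintype ι] [DecidableEq ι]
    [Fintype κ] (F : Matrix ι κ A) (V : Matrix κ ι A) :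
    (F * V).det = ∑ p : ι → κ, (∏ i, V (p i) i) * (F.submatrix id p).det := by
  simp only [det_apply, mul_apply, Finset.prod_univ_sum, Finset.mul_sum, Finset.smul_sum,
    Fintype.piFinset_univ, submatrix_apply, id, Finset.prod_mul_distrib, mul_smul_comm]
  rw [Finset.sum_comm]
  simp only [mul_comm]

theorem Matrix.dvd_det_mul_of_dvd_det_submatrix {A ι κ : Type*} [CommRing A] [Fintype ι]
    [DecidableEq ι] [Fintype κ] {d : A} (F : Matrix ι κ A)
    (hd : ∀ e : ι ↪ κ, d ∣ (F.submatrix id e).det) (V : Matrix κ ι A) : d ∣ (F * V).det := by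
  rw [det_mul_eq_sum_submatrix]
  refine Finset.dvd_sum fun p _ => Dvd.dvd.mul_left ?_ _
  by_cases hp : Function.Injective p
  · exact hd ⟨p, hp⟩
  · obtain ⟨i, j, hij, hne⟩ := Function.not_injective_iff.mp hp
    rw [det_zero_of_column_eq hne fun k => by simp [hij]]
    exact dvd_zero d

theorem Matrix.dvd_pow_of_mem_annihilator_cokernel {A ι κ : Type*} [CommRing A] [Fintype ι]
    [DecidableEq ι] [Fintype κ] [DecidableEq κ] {d a : A} (F : Matrix ι κ A)
    (hd : ∀ e : ι ↪ κ, d ∣ (F.submatrix id e).det)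
    (ha : a ∈ Module.annihilator A ((ι → A) ⧸ LinearMap.range (toLin' F))) :
    d ∣ a ^ Fintype.card ι := by
  have hcol : ∀ j : ι, ∃ v : κ → A, F *ᵥ v = a • Pi.single j 1 := fun j => by
    have := Module.mem_annihilator.mp ha (Submodule.Quotient.mk (Pi.single j 1))
    rwa [← Submodule.Quotient.mk_smul, Submodule.Quotient.mk_eq_zero] at this
  choose v hv using hcol
  have hFV : F * of (fun k j => v j k) = a • (1 : Matrix ι ι A) := by
    ext i j
    have := congr_fun (hv j) i
    simp only [mulVec, dotProduct] at this
    simp [mul_apply, this, Pi.single_apply, one_apply]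
  simpa [hFV, det_smul] using dvd_det_mul_of_dvd_det_submatrix F hd (of fun k j => v j k)

theorem IsOrderOf.exists_dvd_pow_of_mem_annihilator {A M : Type*} [CommRing A] [AddCommGroup M]
    [Module A M] {Δ a : A} (hΔ : IsOrderOf Δ M) (ha : a ∈ Module.annihilator A M) :
    ∃ n : ℕ, Δ ∣ a ^ n := by
  obtain ⟨m, n, F, ⟨e⟩, hmin, -⟩ := hΔ
  rw [← e.annihilator_eq] at ha
  exact ⟨_, F.dvd_pow_of_mem_annihilator_cokernel hmin ha⟩

theorem Module.natCard_mem_annihilator (R M : Type*) [Ring R] [AddCommGroup M] [Module R M] :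
    (Nat.card M : R) ∈ Module.annihilator R M :=
  Module.mem_annihilator.mpr fun x => by rw [Nat.cast_smul_eq_nsmul, card_nsmul_eq_zero']

theorem Module.exists_pow_sub_one_mem_annihilator {R M : Type*} [Ring R] [AddCommGroup M]
    [Module R M] [Finite M] (u : Rˣ) :
    ∃ k ≠ 0, (u : R) ^ k - 1 ∈ Module.annihilator R M := by
  refine ⟨Nat.card (Equiv.Perm M), Nat.card_pos.ne', Module.mem_annihilator.mpr fun x => ?_⟩
  have := congr($(pow_card_eq_one' (x := MulAction.toPermHom Rˣ M u)) x)
  rw [← map_pow] at this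
  rw [sub_smul, one_smul, sub_eq_zero, ← Units.val_pow_eq_pow_val, ← Units.smul_def]
  exact this

theorem Polynomial.eq_C_leadingCoeff_mul_X_pow_of_natTrailingDegree_eq {R : Type*} [Semiring R]
    {p : R[X]} (hp : p.natTrailingDegree = p.natDegree) :
    p = C p.leadingCoeff * X ^ p.natDegree := by
  ext i
  rw [coeff_C_mul_X_pow]
  obtain hi | rfl | hi := lt_trichotomy i p.natDegree
  · rw [if_neg hi.ne, coeff_eq_zero_of_lt_natTrailingDegree (hp ▸ hi)]
  · rw [if_pos rfl, leadingCoeff]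
  · rw [if_neg hi.ne', coeff_eq_zero_of_natDegree_lt hi]

theorem Polynomial.natTrailingDegree_eq_natDegree_of_dvd_C_mul_X_pow {R : Type*} [Semiring R]
    [NoZeroDivisors R] {p : R[X]} {c : R} (hc : c ≠ 0) {j : ℕ} (h : p ∣ C c * X ^ j) :
    p.natTrailingDegree = p.natDegree := by
  have : Nontrivial R := ⟨⟨c, 0, hc⟩⟩
  obtain ⟨q, hq⟩ := h
  have hpq : p * q ≠ 0 := hq ▸ mul_ne_zero (C_ne_zero.mpr hc) (pow_ne_zero _ X_ne_zero)
  have hdeg := natDegree_mul (left_ne_zero_of_mul hpq) (right_ne_zero_of_mul hpq)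
  have htr := natTrailingDegree_mul (left_ne_zero_of_mul hpq) (right_ne_zero_of_mul hpq)
  rw [← hq, natDegree_C_mul_X_pow _ _ hc] at hdeg
  rw [← hq, natTrailingDegree_mul (C_ne_zero.mpr hc) (pow_ne_zero _ X_ne_zero),
    natTrailingDegree_C, natTrailingDegree_X_pow, zero_add] at htr
  have := natTrailingDegree_le_natDegree p
  have := natTrailingDegree_le_natDegree q
  omega

theorem LaurentPolynomial.exists_dvd_mul_X_pow_of_toLaurent_dvd {R : Type*} [CommSemiring R]
    {f g : R[X]} (h : toLaurent f ∣ toLaurent g) : ∃ j : ℕ, f ∣ g * X ^ j := by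
  obtain ⟨q, hq⟩ := h
  obtain ⟨j, q', hq'⟩ := exists_T_pow q
  refine ⟨j, q', toLaurent_injective ?_⟩
  rw [map_mul, map_mul, hq', hq, toLaurent_X_pow, mul_assoc]

theorem LaurentPolynomial.isUnit_of_dvd_C_of_dvd_toLaurent_monic {R : Type*} [CommRing R]
    [IsDomain R] {Δ : R[T;T⁻¹]} {c : R} (hc : c ≠ 0) (hΔc : Δ ∣ C c) {g : R[X]} (hg : g.Monic)
    (hΔg : Δ ∣ toLaurent g) : IsUnit Δ := by
  obtain ⟨a, f, hf⟩ := exists_T_pow Δ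
  have hassoc : Associated (toLaurent f) Δ := hf ▸ (associated_mul_unit_left _ _ (isUnit_T a))
  obtain ⟨i, hfc⟩ := exists_dvd_mul_X_pow_of_toLaurent_dvd
    (hassoc.dvd_iff_dvd_left.mpr (toLaurent_C c ▸ hΔc))
  obtain ⟨j, hfg⟩ := exists_dvd_mul_X_pow_of_toLaurent_dvd (hassoc.dvd_iff_dvd_left.mpr hΔg)
  have hmono := eq_C_leadingCoeff_mul_X_pow_of_natTrailingDegree_eq
    (natTrailingDegree_eq_natDegree_of_dvd_C_mul_X_pow hc hfc)
  have hunit : IsUnit f.leadingCoeff := (hg.mul (monic_X_pow j)).C_dvd_iff_isUnit.mp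
    ((Dvd.intro _ hmono.symm).trans hfg)
  refine hassoc.isUnit ?_
  rw [hmono, map_mul, toLaurent_C, toLaurent_X_pow]
  exact (hunit.map C).mul (isUnit_T _)

/-- A module over `ℤ[s^{±1}]` that is finite as a set (a pseudonull module)
has trivial order: its order `Δ₀(M)` is a unit. -/
theorem stmt_13 (M : Type*) [AddCommGroup M] [Module (LaurentPolynomial ℤ) M]
    [Finite M] (Δ : LaurentPolynomial ℤ) (hΔ : IsOrderOf Δ M) :
    IsUnit Δ := by
  obtain ⟨k, hk, hTk⟩ :=
    Module.exists_pow_sub_one_mem_annihilator (M := M) (isUnit_T (R := ℤ) 1).unit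
  obtain ⟨n₁, hN⟩ := hΔ.exists_dvd_pow_of_mem_annihilator (Module.natCard_mem_annihilator _ M)
  obtain ⟨n₂, hT⟩ := hΔ.exists_dvd_pow_of_mem_annihilator hTk
  have hcard : (Nat.card M : ℤ) ^ n₁ ≠ 0 := pow_ne_zero _ (Nat.cast_ne_zero.mpr Nat.card_pos.ne')
  refine isUnit_of_dvd_C_of_dvd_toLaurent_monic hcard ?_ ((monic_X_pow_sub_C 1 hk).pow n₂) ?_
  · simpa using hN
  · simpa [T_pow] using hT
end

section
/- Let φ be an automorphism of a finitely generated free group F of rank n and let φ* be the induced automorphism of the abelianization F^{ab} ≅ ℤⁿ, with matrix A ∈ GLₙ(ℤ). Then every eigenvalue λ of A satisfies |λ| ≤ GR(φ). -/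
/-! On `ℤⁿ = F^{ab}` the `(i, j)` entry of `Aᵏ` is the `i`-th coordinate of the image of
`φᵏ(xⱼ)`, and each letter of a word changes a coordinate by at most one, so
`|(Aᵏ)ᵢⱼ| ≤ ‖φᵏ(xⱼ)‖`. An eigenvector of `A` for `λ` gives `|λ|ᵏ ≤ ‖Aᵏ‖_∞ ≤ ∑ⱼ ‖φᵏ(xⱼ)‖`.
For every `c > GR(φ)` each summand is eventually below `cᵏ`, so `|λ|ᵏ ≤ n cᵏ` for large `k`,
which forces `|λ| ≤ c`. -/

open Filter
open scoped ENNReal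

/-- Word length of `g` with respect to a generating set `S` (length of a
shortest word in the elements of `S` and their inverses representing `g`). -/
noncomputable def wordLength {H : Type*} [Group H] (S : Set H) (g : H) : ℕ :=
  sInf {k | ∃ w : List H, w.length = k ∧ (∀ x ∈ w, x ∈ S ∨ x⁻¹ ∈ S) ∧ w.prod = g}

/-- The growth rate `GR(φ) = max_{g ∈ S} limsup_k ‖φᵏ(g)‖^{1/k}` of an
endomorphism `φ` with respect to a finite generating set `S`. -/
noncomputable def growthRate {H : Type*} [Group H] (S : Finset H) (φ : H →* H) : ℝ≥0∞ :=
  ⨆ g ∈ S, Filter.atTop.limsup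
    (fun k : ℕ => ((wordLength (S : Set H) ((⇑φ)^[k] g) : ℝ≥0∞)) ^ (1 / (k : ℝ)))

/-- The abelianization map of the free group of rank `n`, written
multiplicatively, sending the `i`-th basis element to the `i`-th standard
basis vector of `ℤⁿ`. -/
noncomputable def abMap (n : ℕ) :
    FreeGroup (Fin n) →* Multiplicative (Fin n → ℤ) :=
  FreeGroup.lift (fun i => Multiplicative.ofAdd (Pi.single i 1))

open Matrix

section WordLength

variable {H E : Type*} [Group H] [SeminormedAddCommGroup E] {S : Set H}

lemma exists_list_length_eq_wordLength {g : H} (hg : g ∈ Subgroup.closure S) :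
    ∃ w : List H, w.length = wordLength S g ∧ (∀ x ∈ w, x ∈ S ∨ x⁻¹ ∈ S) ∧ w.prod = g := by
  rw [← Subgroup.mem_toSubmonoid, Subgroup.closure_toSubmonoid] at hg
  obtain ⟨w, hwS, rfl⟩ := Submonoid.exists_list_of_mem_closure hg
  exact Nat.sInf_mem (s := {k | ∃ v : List H, v.length = k ∧ (∀ x ∈ v, x ∈ S ∨ x⁻¹ ∈ S) ∧
    v.prod = w.prod}) ⟨w.length, w, rfl, hwS, rfl⟩

lemma norm_toAdd_list_prod_le (f : H →* Multiplicative E) {w : List H}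
    (hw : ∀ x ∈ w, ‖(f x).toAdd‖ ≤ 1) : ‖(f w.prod).toAdd‖ ≤ w.length := by
  induction w with
  | nil => simp
  | cons x w ih =>
    rw [List.forall_mem_cons] at hw
    rw [List.prod_cons, map_mul, toAdd_mul, List.length_cons, Nat.cast_succ, add_comm]
    exact (norm_add_le _ _).trans (add_le_add (ih hw.2) hw.1)

lemma norm_toAdd_le_wordLength (f : H →* Multiplicative E) (hf : ∀ s ∈ S, ‖(f s).toAdd‖ ≤ 1)
    {g : H} (hg : g ∈ Subgroup.closure S) : ‖(f g).toAdd‖ ≤ wordLength S g := by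
  obtain ⟨w, hlen, hwS, rfl⟩ := exists_list_length_eq_wordLength hg
  rw [← hlen]
  refine norm_toAdd_list_prod_le f fun x hx => ?_
  rcases hwS x hx with hx | hx
  · exact hf x hx
  · simpa using hf _ hx

end WordLength

section Abelianization

variable {n : ℕ} {φ : FreeGroup (Fin n) →* FreeGroup (Fin n)} {A : Matrix (Fin n) (Fin n) ℤ}

lemma toAdd_abMap_of (i : Fin n) : (abMap n (FreeGroup.of i)).toAdd = Pi.single i 1 :=
  congrArg Multiplicative.toAdd FreeGroup.lift_apply_of

lemma norm_toAdd_abMap_le_wordLength (g : FreeGroup (Fin n)) :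
    ‖(abMap n g).toAdd‖ ≤ wordLength (Set.range FreeGroup.of) g := by
  refine norm_toAdd_le_wordLength _ ?_ (by simp [FreeGroup.closure_range_of])
  rintro _ ⟨i, rfl⟩
  simp [toAdd_abMap_of, Pi.norm_single]

lemma toAdd_abMap_iterate
    (hA : ∀ x, (abMap n (φ x)).toAdd = A *ᵥ (abMap n x).toAdd) (k : ℕ) (x : FreeGroup (Fin n)) :
    (abMap n (φ^[k] x)).toAdd = (A ^ k) *ᵥ (abMap n x).toAdd := by
  induction k with
  | zero => simp
  | succ k ih => rw [Function.iterate_succ_apply', hA, ih, mulVec_mulVec, ← pow_succ']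

lemma pow_apply_eq_toAdd_abMap_iterate_of
    (hA : ∀ x, (abMap n (φ x)).toAdd = A *ᵥ (abMap n x).toAdd) (k : ℕ) (i j : Fin n) :
    (A ^ k) i j = (abMap n (φ^[k] (FreeGroup.of j))).toAdd i := by
  rw [toAdd_abMap_iterate hA, toAdd_abMap_of, mulVec_single_one, col_apply]

lemma abs_pow_apply_le_wordLength
    (hA : ∀ x, (abMap n (φ x)).toAdd = A *ᵥ (abMap n x).toAdd) (k : ℕ) (i j : Fin n) :
    |((A ^ k) i j : ℝ)| ≤ wordLength (Set.range FreeGroup.of) (φ^[k] (FreeGroup.of j)) := by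
  rw [← Int.norm_eq_abs, pow_apply_eq_toAdd_abMap_iterate_of hA]
  exact (norm_le_pi_norm _ i).trans (norm_toAdd_abMap_le_wordLength _)

end Abelianization

section LinftyOpNorm

attribute [local instance] Matrix.linftyOpNormedRing

variable {m : Type*} [Fintype m] [DecidableEq m] {𝕜 : Type*} [NormedField 𝕜]

lemma Matrix.linfty_opNorm_le_of_forall_sum_le {M : Matrix m m 𝕜} {C : ℝ} (hC : 0 ≤ C)
    (h : ∀ i, ∑ j, ‖M i j‖ ≤ C) : ‖M‖ ≤ C := by
  lift C to NNReal using hC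
  rw [linfty_opNorm_def, NNReal.coe_le_coe]
  exact Finset.sup_le fun i _ => by rw [← NNReal.coe_le_coe]; push_cast; exact h i

lemma Matrix.norm_pow_le_linfty_opNorm_pow {B : Matrix m m 𝕜} {μ : 𝕜}
    (hμ : B.charpoly.IsRoot μ) (k : ℕ) : ‖μ‖ ^ k ≤ ‖B ^ k‖ := by
  rw [← charpoly_toLin', ← Module.End.hasEigenvalue_iff_isRoot_charpoly] at hμ
  obtain ⟨v, hv⟩ := hμ.exists_hasEigenvector
  have hBv : (B ^ k) *ᵥ v = μ ^ k • v := by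
    rw [← toLin'_apply, toLin'_pow, hv.pow_apply]
  have hle := linfty_opNorm_mulVec (B ^ k) v
  rw [hBv, norm_smul, norm_pow] at hle
  exact le_of_mul_le_mul_right hle (norm_pos_iff.2 hv.2)

lemma Matrix.norm_pow_le_sum_of_norm_pow_apply_le {B : Matrix m m 𝕜} {μ : 𝕜}
    (hμ : B.charpoly.IsRoot μ) {k : ℕ} {b : m → ℝ} (hb : ∀ i j, ‖(B ^ k) i j‖ ≤ b j) :
    ‖μ‖ ^ k ≤ ∑ j, b j :=
  (norm_pow_le_linfty_opNorm_pow hμ k).trans <|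
    linfty_opNorm_le_of_forall_sum_le (Finset.sum_nonneg fun j _ => (norm_nonneg _).trans (hb j j))
      fun i => Finset.sum_le_sum fun j _ => hb i j

end LinftyOpNorm

lemma NNReal.le_of_eventually_pow_le_mul_pow {a c C : NNReal}
    (h : ∀ᶠ k in atTop, a ^ k ≤ C * c ^ k) : a ≤ c := by
  by_contra! hca
  have ha : 0 < a := pos_of_gt hca
  have hlim : Tendsto (fun k => C * (c / a) ^ k) atTop (nhds 0) := by
    simpa using (tendsto_pow_atTop_nhds_zero_of_lt_one ((div_lt_one ha).2 hca)).const_mul C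
  obtain ⟨k, hk, hk1⟩ := (h.and (hlim.eventually (gt_mem_nhds one_pos))).exists
  rw [div_pow, ← mul_div_assoc, div_lt_one (pow_pos ha k)] at hk1
  exact hk1.not_ge hk

lemma ENNReal.le_of_eventually_pow_le_mul_pow {a c C : ℝ≥0∞} (hC : C ≠ ⊤)
    (h : ∀ᶠ k in atTop, a ^ k ≤ C * c ^ k) : a ≤ c := by
  rcases eq_or_ne c ⊤ with rfl | hc
  · exact le_top
  have ha : a ≠ ⊤ := by
    obtain ⟨k, hk, hk1⟩ := (h.and (eventually_ge_atTop 1)).exists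
    have : a ^ k ≠ ⊤ := ne_top_of_le_ne_top (mul_ne_top hC (pow_ne_top hc)) hk
    exact (pow_ne_top_iff.1 this).resolve_right (by omega)
  lift a to NNReal using ha
  lift c to NNReal using hc
  lift C to NNReal using hC
  refine coe_le_coe.2 (NNReal.le_of_eventually_pow_le_mul_pow (C := C) ?_)
  filter_upwards [h] with k hk
  exact_mod_cast hk

lemma ENNReal.le_of_pow_le_sum_of_limsup_root_le {ι : Type*} [Fintype ι] {a G : ℝ≥0∞}
    {u : ι → ℕ → ℝ≥0∞} (hu : ∀ j, limsup (fun k : ℕ => u j k ^ (1 / (k : ℝ))) atTop ≤ G)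
    (h : ∀ k, a ^ k ≤ ∑ j, u j k) : a ≤ G := by
  refine le_of_forall_gt_imp_ge_of_dense fun c hGc => ?_
  refine le_of_eventually_pow_le_mul_pow (C := Fintype.card ι) (natCast_ne_top _) ?_
  have hroot : ∀ j, ∀ᶠ k : ℕ in atTop, u j k ^ (1 / (k : ℝ)) < c := fun j =>
    eventually_lt_of_limsup_lt ((hu j).trans_lt hGc)
  filter_upwards [eventually_all.2 hroot, eventually_gt_atTop 0] with k hk hk0
  calc a ^ k ≤ ∑ j, u j k := h k
    _ ≤ ∑ _j : ι, c ^ k := by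
        gcongr with j
        have hkj := hk j
        rw [one_div, rpow_inv_lt_iff (by positivity), rpow_natCast] at hkj
        exact hkj.le
    _ = Fintype.card ι * c ^ k := by simp

theorem stmt_16_general (n : ℕ) (φ : FreeGroup (Fin n) ≃* FreeGroup (Fin n))
    (A : Matrix (Fin n) (Fin n) ℤ)
    (hA : ∀ x : FreeGroup (Fin n),
      Multiplicative.toAdd (abMap n (φ x)) = A.mulVec (Multiplicative.toAdd (abMap n x)))
    (lam : ℂ) (hlam : ((A.map (Int.cast : ℤ → ℂ)).charpoly).IsRoot lam) :
    ENNReal.ofReal ‖lam‖ ≤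
      growthRate (Finset.univ.image (FreeGroup.of : Fin n → FreeGroup (Fin n)))
        φ.toMonoidHom := by
  set S : Finset (FreeGroup (Fin n)) := Finset.univ.image FreeGroup.of
  have hS : (S : Set (FreeGroup (Fin n))) = Set.range FreeGroup.of := by simp [S]
  set L : Fin n → ℕ → ℕ := fun j k => wordLength (S : Set _) (φ.toMonoidHom^[k] (FreeGroup.of j))
  have hpow : ∀ k, ‖lam‖ ^ k ≤ ∑ j, (L j k : ℝ) := fun k =>
    Matrix.norm_pow_le_sum_of_norm_pow_apply_le hlam fun i j => by
      have hmap : (A.map (Int.cast : ℤ → ℂ)) ^ k = (A ^ k).map Int.cast :=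
        (Matrix.map_pow A (Int.castRingHom ℂ) k).symm
      rw [hmap, map_apply, Complex.norm_intCast]
      simpa only [L, hS] using abs_pow_apply_le_wordLength hA k i j
  refine ENNReal.le_of_pow_le_sum_of_limsup_root_le (u := fun j k => L j k)
    (fun j => le_iSup₂_of_le (FreeGroup.of j) (by simp [S]) le_rfl) fun k => ?_
  rw [← ENNReal.ofReal_pow (norm_nonneg _)]
  calc ENNReal.ofReal (‖lam‖ ^ k) ≤ ENNReal.ofReal (∑ j, (L j k : ℝ)) :=
        ENNReal.ofReal_le_ofReal (hpow k)
    _ = ∑ j, (L j k : ℝ≥0∞) := by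
        rw [ENNReal.ofReal_sum_of_nonneg fun j _ => Nat.cast_nonneg _]
        simp only [ENNReal.ofReal_natCast]

/-- If `φ` is an automorphism of the free group of rank `n` inducing the matrix
`A ∈ GLₙ(ℤ)` on the abelianization `ℤⁿ`, then every (complex) eigenvalue `λ`
of `A` satisfies `|λ| ≤ GR(φ)`, the growth rate computed with respect to the
free basis. -/
theorem stmt_16 (n : ℕ) (φ : FreeGroup (Fin n) ≃* FreeGroup (Fin n))
    (A : Matrix (Fin n) (Fin n) ℤ) (hGL : IsUnit A.det)
    (hA : ∀ x : FreeGroup (Fin n),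
      Multiplicative.toAdd (abMap n (φ x)) = A.mulVec (Multiplicative.toAdd (abMap n x)))
    (lam : ℂ) (hlam : ((A.map (Int.cast : ℤ → ℂ)).charpoly).IsRoot lam) :
    ENNReal.ofReal ‖lam‖ ≤
      growthRate (Finset.univ.image (FreeGroup.of : Fin n → FreeGroup (Fin n)))
        φ.toMonoidHom :=
  stmt_16_general n φ A hA lam hlam
end
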